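/- Let ω : E_k^t → E_k with d(ω) ≤ D, let h_1, ..., h_t : E_k^n → E_k be monotone, and let g : E_k^{n+1} → E_k satisfy d(g) ≤ M. Define f(x) = g(ω(h_1(x), ..., h_t(x)), x). Then d(f) ≤ (D + 1)(M + 1) - 1. -/

import Mathlib

/-!
Write `ψ x = ω (h₁ x, …, hₜ x)`. Composing with the monotone map `x ↦ (h₁ x, …, hₜ x)` cannot
increase the decrease: a chain is sent to a weakly increasing list, and deleting repetitions
leaves a chain of `ω` with the same number of descents, so `d(ψ) ≤ D`. Along a chain of `E_kⁿ`,
the descents of `ψ` cut it into at most `D + 1` blocks on which `ψ` is weakly increasing; on each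
block `x ↦ (ψ x, x)` is a chain of `E_kⁿ⁺¹`, so `f` has at most `M` descents inside a block, plus
possibly one at each of the `≤ D` cuts: `d(f) ≤ (D + 1) M + D = (D + 1)(M + 1) - 1`.
-/

/-- A chain in `E_k^n`: pairwise distinct tuples increasing coordinatewise,
    i.e. strictly increasing in the coordinatewise (product) order. -/
def IsChainE {n k : ℕ} (C : List (Fin n → Fin k)) : Prop :=
  C.Chain' (· < ·)

/-- The decrease `d_C(f)` of `f` over a chain `C`: number of consecutive
    pairs on which `f` strictly decreases. -/
def decC {n k : ℕ} (f : (Fin n → Fin k) → Fin k) (C : List (Fin n → Fin k)) : ℕ :=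
  (C.zip C.tail).countP (fun p => decide (f p.2 < f p.1))

/-- The decrease `d(f)` of `f`: maximum of `d_C(f)` over all chains `C`. -/
noncomputable def dF {n k : ℕ} (f : (Fin n → Fin k) → Fin k) : ℕ :=
  sSup {m : ℕ | ∃ C : List (Fin n → Fin k), IsChainE C ∧ decC f C = m}

section Decrease

variable {n k : ℕ}

lemma IsChainE.nodup {C : List (Fin n → Fin k)} (hC : IsChainE C) : C.Nodup :=
  (List.isChain_iff_pairwise.1 hC).imp ne_of_lt

lemma decC_cons_cons (f : (Fin n → Fin k) → Fin k) (a b : Fin n → Fin k)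
    (l : List (Fin n → Fin k)) :
    decC f (a :: b :: l) = decC f (b :: l) + if f b < f a then 1 else 0 := by
  simp [decC, List.countP_cons]

lemma decC_singleton (f : (Fin n → Fin k) → Fin k) (a : Fin n → Fin k) : decC f [a] = 0 := by
  simp [decC]

lemma decC_le_card (f : (Fin n → Fin k) → Fin k) {C : List (Fin n → Fin k)} (hC : IsChainE C) :
    decC f C ≤ Fintype.card (Fin n → Fin k) :=
  calc decC f C ≤ (C.zip C.tail).length := List.countP_le_length
    _ ≤ C.length := by simp
    _ ≤ _ := hC.nodup.length_le_card

lemma bddAbove_decC (f : (Fin n → Fin k) → Fin k) :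
    BddAbove {m : ℕ | ∃ C : List (Fin n → Fin k), IsChainE C ∧ decC f C = m} :=
  ⟨Fintype.card (Fin n → Fin k), by rintro m ⟨C, hC, rfl⟩; exact decC_le_card f hC⟩

lemma decC_le_dF (f : (Fin n → Fin k) → Fin k) {C : List (Fin n → Fin k)} (hC : IsChainE C) :
    decC f C ≤ dF f :=
  le_csSup (bddAbove_decC f) ⟨C, hC, rfl⟩

lemma dF_le_of_forall_decC_le (f : (Fin n → Fin k) → Fin k) {B : ℕ}
    (hB : ∀ C, IsChainE C → decC f C ≤ B) : dF f ≤ B :=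
  csSup_le ⟨0, [], List.isChain_nil, rfl⟩ (by rintro m ⟨C, hC, rfl⟩; exact hB C hC)

end Decrease

section Composition

variable {n t k : ℕ}

lemma exists_isChainE_decC_comp_eq (ω : (Fin t → Fin k) → Fin k)
    {H : (Fin n → Fin k) → Fin t → Fin k} (hH : Monotone H) :
    ∀ C : List (Fin n → Fin k), IsChainE C →
      ∃ C' : List (Fin t → Fin k), IsChainE C' ∧ C'.head? = (C.map H).head? ∧
        decC ω C' = decC (ω ∘ H) C
  | [], _ => ⟨[], List.isChain_nil, rfl, rfl⟩
  | [a], _ => ⟨[H a], List.isChain_singleton _, rfl, by simp only [decC_singleton]⟩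
  | a :: b :: l, hC => by
    obtain ⟨hab, hbl⟩ := List.isChain_cons_cons.1 hC
    obtain ⟨C', hC', hhead, hdec⟩ := exists_isChainE_decC_comp_eq ω hH (b :: l) hbl
    obtain ⟨cs, rfl⟩ : ∃ cs, C' = H b :: cs := by
      cases C' with
      | nil => simp at hhead
      | cons c cs => exact ⟨cs, by simpa using hhead⟩
    rcases (hH hab.le).lt_or_eq with hlt | heq
    · exact ⟨H a :: H b :: cs, List.isChain_cons_cons.2 ⟨hlt, hC'⟩, rfl, by
        rw [decC_cons_cons, decC_cons_cons, hdec]; rfl⟩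
    · exact ⟨H b :: cs, hC', by simp [heq], by
        rw [decC_cons_cons, hdec]; simp [heq]⟩

lemma dF_comp_le_of_monotone (ω : (Fin t → Fin k) → Fin k)
    {H : (Fin n → Fin k) → Fin t → Fin k} (hH : Monotone H) : dF (ω ∘ H) ≤ dF ω :=
  dF_le_of_forall_decC_le _ fun C hC ↦ by
    obtain ⟨C', hC', -, hdec⟩ := exists_isChainE_decC_comp_eq ω hH C hC
    exact hdec ▸ decC_le_dF ω hC'

end Composition

section Graph

variable {n k : ℕ}

lemma Fin.cons_lt_cons_of_le_of_lt {a b : Fin k} {x y : Fin n → Fin k} (hab : a ≤ b)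
    (hxy : x < y) : (Fin.cons a x : Fin (n + 1) → Fin k) < Fin.cons b y := by
  rw [lt_iff_le_not_ge, Fin.cons_le_cons, Fin.cons_le_cons]
  exact ⟨⟨hab, hxy.le⟩, fun h ↦ hxy.not_ge h.2⟩

/-- `C'` is the image under `x ↦ (ψ x, x)` of the last block of `C` on which `ψ` is weakly
increasing; each earlier block contributes at most `dF g` descents, plus one at its cut. -/
lemma exists_isChainE_decC_graph_le (ψ : (Fin n → Fin k) → Fin k)
    (g : (Fin (n + 1) → Fin k) → Fin k) :
    ∀ C : List (Fin n → Fin k), IsChainE C →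
      ∃ C' : List (Fin (n + 1) → Fin k), IsChainE C' ∧
        C'.head? = (C.map fun x ↦ Fin.cons (ψ x) x).head? ∧
        decC (fun x ↦ g (Fin.cons (ψ x) x)) C ≤ decC ψ C * (dF g + 1) + decC g C'
  | [], _ => ⟨[], List.isChain_nil, rfl, by simp [decC]⟩
  | [a], _ => ⟨[Fin.cons (ψ a) a], List.isChain_singleton _, rfl, by simp [decC_singleton]⟩
  | a :: b :: l, hC => by
    obtain ⟨hab, hbl⟩ := List.isChain_cons_cons.1 hC
    obtain ⟨C', hC', hhead, hdec⟩ := exists_isChainE_decC_graph_le ψ g (b :: l) hbl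
    obtain ⟨cs, rfl⟩ : ∃ cs, C' = Fin.cons (ψ b) b :: cs := by
      cases C' with
      | nil => simp at hhead
      | cons c cs => exact ⟨cs, by simpa using hhead⟩
    rw [decC_cons_cons, decC_cons_cons ψ]
    rcases le_or_gt (ψ a) (ψ b) with hle | hlt
    · refine ⟨Fin.cons (ψ a) a :: Fin.cons (ψ b) b :: cs,
        List.isChain_cons_cons.2 ⟨Fin.cons_lt_cons_of_le_of_lt hle hab, hC'⟩, rfl, ?_⟩
      rw [decC_cons_cons g, if_neg hle.not_gt, add_zero]
      omega
    · refine ⟨[Fin.cons (ψ a) a], List.isChain_singleton _, rfl, ?_⟩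
      have hgM : decC g (Fin.cons (ψ b) b :: cs) ≤ dF g := decC_le_dF g hC'
      rw [decC_singleton, if_pos hlt, add_one_mul]
      split <;> omega

lemma dF_graph_le (ψ : (Fin n → Fin k) → Fin k) (g : (Fin (n + 1) → Fin k) → Fin k) :
    dF (fun x ↦ g (Fin.cons (ψ x) x)) ≤ (dF ψ + 1) * (dF g + 1) - 1 :=
  dF_le_of_forall_decC_le _ fun C hC ↦ by
    obtain ⟨C', hC', -, hdec⟩ := exists_isChainE_decC_graph_le ψ g C hC
    have hψ : decC ψ C * (dF g + 1) ≤ dF ψ * (dF g + 1) :=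
      Nat.mul_le_mul_right _ (decC_le_dF ψ hC)
    have hg : decC g C' ≤ dF g := decC_le_dF g hC'
    rw [add_one_mul]
    omega

end Graph

/-- If `d(ω) ≤ D`, the `h_i` are monotone and `d(g) ≤ M`, then
    `f(x) = g(ω(h₁(x),...,h_t(x)), x)` satisfies `d(f) ≤ (D+1)(M+1) - 1`. -/
theorem stmt8 {n t k D M : ℕ} (ω : (Fin t → Fin k) → Fin k) (hω : dF ω ≤ D)
    (h : Fin t → (Fin n → Fin k) → Fin k) (hh : ∀ i, Monotone (h i))
    (g : (Fin (n + 1) → Fin k) → Fin k) (hg : dF g ≤ M) :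
    dF (fun x => g (Fin.cons (ω (fun i => h i x)) x)) ≤ (D + 1) * (M + 1) - 1 := by
  have hψ : dF (ω ∘ fun x i ↦ h i x) ≤ D :=
    (dF_comp_le_of_monotone ω fun _ _ hxy i ↦ hh i hxy).trans hω
  calc dF (fun x => g (Fin.cons (ω (fun i => h i x)) x))
      ≤ (dF (ω ∘ fun x i ↦ h i x) + 1) * (dF g + 1) - 1 := dF_graph_le _ g
    _ ≤ (D + 1) * (M + 1) - 1 := Nat.sub_le_sub_right (by gcongr) 1
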